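/- If a graph G is determined by its domination polynomial (D-unique), then for every m ≥ 1 the join G ∨ K_m is also determined by its domination polynomial. -/

import Mathlib

open Polynomial SimpleGraph

/-- `S` is a dominating set of `G`: every vertex is in `S` or adjacent to a vertex of `S`. -/
def IsDomSet {V : Type*} (G : SimpleGraph V) (S : Finset V) : Prop :=
  ∀ v : V, v ∈ S ∨ ∃ u ∈ S, G.Adj u v

/-- The domination polynomial `D(G,x) = ∑ d(G,i) xⁱ`. -/
noncomputable def domPoly {V : Type*} [Fintype V] (G : SimpleGraph V) : Polynomial ℤ :=
  ∑ i ∈ Finset.range (Fintype.card V + 1),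
    (Nat.card {S : Finset V // IsDomSet G S ∧ S.card = i} : ℤ) • (X : Polynomial ℤ) ^ i
/-- The join `G ∨ H`: disjoint union plus all edges between the two parts. -/
def joinGraph {α β : Type*} (G : SimpleGraph α) (H : SimpleGraph β) :
    SimpleGraph (α ⊕ β) :=
  (G ⊕g H) ⊔ SimpleGraph.fromRel (fun x y => x.isLeft ∧ y.isRight)

/-- `G` is determined by its domination polynomial. -/
def DUnique {V : Type} [Fintype V] (G : SimpleGraph V) : Prop :=
  ∀ (W : Type) [Fintype W], ∀ H : SimpleGraph W, domPoly H = domPoly G → Nonempty (H ≃g G)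

/-!
A dominating set of `G ∨ K_m` either meets `K_m`, or is a nonempty dominating set of `G`; hence
`D(G ∨ K_m) = ((x + 1)^m - 1)(x + 1)^n + D(G) - [n = 0]` with `n = |G|`. If `D(H) = D(G ∨ K_m)`,
the degrees give `|H| = n + m`, and the linear coefficients show that `H` has at least `m`
universal vertices (a singleton dominates exactly when its vertex is universal). Splitting off
`m` of them gives `H ≅ H₀ ∨ K_m` with `|H₀| = n`, so the formula forces `D(H₀) = D(G)` and
`H₀ ≅ G` by D-uniqueness.
-/

open Finset

variable {V W α β : Type*}

section IsDomSet

variable {G : SimpleGraph V} {H : SimpleGraph W}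

lemma isDomSet_empty_iff : IsDomSet G ∅ ↔ IsEmpty V := by
  simp [IsDomSet, isEmpty_iff]

lemma isDomSet_singleton_iff {v : V} : IsDomSet G {v} ↔ ∀ w, w ≠ v → G.Adj v w := by
  refine forall_congr' fun w => ?_
  simp only [mem_singleton, exists_eq_left]
  tauto

lemma isDomSet_map_iso_iff (e : G ≃g H) {S : Finset V} :
    IsDomSet H (S.map e.toEquiv.toEmbedding) ↔ IsDomSet G S := by
  simp only [IsDomSet, e.surjective.forall, e.surjective.exists, mem_map, Equiv.coe_toEmbedding,
    RelIso.coe_fn_toEquiv, e.injective.eq_iff, exists_eq_right, e.map_adj_iff]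

end IsDomSet

section domPoly

variable [Fintype V] [Fintype W]

open Classical in
lemma domPoly_eq_sum (G : SimpleGraph V) :
    domPoly G = ∑ S, if IsDomSet G S then (X : ℤ[X]) ^ #S else 0 := by
  rw [← sum_filter, domPoly, ← sum_fiberwise_of_maps_to (g := card)
    (t := range (Fintype.card V + 1)) (fun S _ => mem_range_succ_iff.mpr (card_le_univ S))]
  refine sum_congr rfl fun i _ => ?_
  rw [Nat.card_eq_fintype_card, Fintype.card_subtype, filter_filter, natCast_zsmul,
    sum_congr rfl fun S hS => by rw [(mem_filter.mp hS).2.2], sum_const]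

open Classical in
lemma coeff_domPoly (G : SimpleGraph V) (k : ℕ) :
    (domPoly G).coeff k = #{S : Finset V | IsDomSet G S ∧ #S = k} := by
  simp only [domPoly_eq_sum, finsetSum_coeff, coeff_X_pow, ← sum_filter, filter_filter,
    eq_comm (a := k), sum_const, Nat.smul_one_eq_cast]

lemma coeff_one_domPoly (G : SimpleGraph V) [DecidablePred fun v => IsDomSet G {v}] :
    (domPoly G).coeff 1 = #{v | IsDomSet G {v}} := by
  classical
  rw [coeff_domPoly, Nat.cast_inj]
  symm
  refine card_bij (fun v _ => {v}) (fun v hv => by simpa using hv)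
    (fun v _ w _ => singleton_inj.mp) (fun S hS => ?_)
  obtain ⟨hdom, hcard⟩ := (mem_filter.mp hS).2
  obtain ⟨v, rfl⟩ := card_eq_one.mp hcard
  exact ⟨v, by simpa using hdom, rfl⟩

lemma natDegree_domPoly (G : SimpleGraph V) : (domPoly G).natDegree = Fintype.card V := by
  classical
  refine natDegree_eq_of_le_of_coeff_ne_zero ?_ ?_
  · refine natDegree_le_iff_coeff_eq_zero.mpr fun k hk => ?_
    rw [coeff_domPoly, Nat.cast_eq_zero, card_eq_zero, filter_eq_empty_iff]
    exact fun S _ hS => (card_le_univ S).not_gt (hS.2 ▸ hk)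
  · rw [coeff_domPoly, Nat.cast_ne_zero, ← pos_iff_ne_zero, card_pos]
    exact ⟨univ, mem_filter.mpr ⟨mem_univ _, fun v => Or.inl (mem_univ v), card_univ⟩⟩

lemma card_eq_of_domPoly_eq {G : SimpleGraph V} {H : SimpleGraph W}
    (h : domPoly H = domPoly G) : Fintype.card W = Fintype.card V := by
  rw [← natDegree_domPoly H, h, natDegree_domPoly]

lemma domPoly_congr {G : SimpleGraph V} {H : SimpleGraph W} (e : G ≃g H) :
    domPoly G = domPoly H := by
  classical
  ext k
  rw [coeff_domPoly, coeff_domPoly, Nat.cast_inj]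
  exact card_equiv e.toEquiv.finsetCongr fun S => by
    simp only [mem_filter, mem_univ, true_and, Equiv.finsetCongr_apply, isDomSet_map_iso_iff,
      card_map]

end domPoly

section joinGraph

variable {A : SimpleGraph α} {B : SimpleGraph β}

@[simp] lemma joinGraph_adj_inl_inl {a a' : α} :
    (joinGraph A B).Adj (.inl a) (.inl a') ↔ A.Adj a a' := by
  simp [joinGraph]

@[simp] lemma joinGraph_adj_inr_inr {b b' : β} :
    (joinGraph A B).Adj (.inr b) (.inr b') ↔ B.Adj b b' := by
  simp [joinGraph]

@[simp] lemma joinGraph_adj_inl_inr {a : α} {b : β} :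
    (joinGraph A B).Adj (.inl a) (.inr b) := by
  simp [joinGraph]

@[simp] lemma joinGraph_adj_inr_inl {a : α} {b : β} :
    (joinGraph A B).Adj (.inr b) (.inl a) := by
  simp [joinGraph]

lemma isDomSet_joinGraph_completeGraph_disjSum_iff [Nonempty β] {L : Finset α} {R : Finset β} :
    IsDomSet (joinGraph A (completeGraph β)) (L.disjSum R) ↔
      R.Nonempty ∨ L.Nonempty ∧ IsDomSet A L := by
  simp only [IsDomSet, Sum.forall, Sum.exists, inl_mem_disjSum, inr_mem_disjSum,
    joinGraph_adj_inl_inl, joinGraph_adj_inr_inl, joinGraph_adj_inl_inr, joinGraph_adj_inr_inr,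
    completeGraph_eq_top, top_adj, and_true]
  constructor
  · rintro ⟨hL, hR⟩
    rcases R.eq_empty_or_nonempty with rfl | hR'
    · obtain ⟨b⟩ := ‹Nonempty β›
      simp only [notMem_empty, false_or, false_and, exists_false, or_false] at hL hR
      exact Or.inr ⟨hR b, hL⟩
    · exact Or.inl hR'
  · rintro (⟨r, hr⟩ | ⟨⟨a, ha⟩, hL⟩)
    · refine ⟨fun _ => Or.inr (Or.inr ⟨r, hr⟩), fun b => ?_⟩
      rcases eq_or_ne r b with rfl | hrb
      exacts [Or.inl hr, Or.inr (Or.inr ⟨r, hr, hrb⟩)]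
    · exact ⟨fun v => (hL v).imp_right Or.inl, fun _ => Or.inr (Or.inl ⟨a, ha⟩)⟩

end joinGraph

lemma sum_pow_card_finset {R : Type*} [CommSemiring R] (ι : Type*) [Fintype ι] (a : R) :
    ∑ s : Finset ι, a ^ #s = (a + 1) ^ Fintype.card ι := by
  simpa using Fintype.sum_pow_mul_eq_add_pow ι a 1

lemma domPoly_joinGraph_completeGraph [Fintype α] [Fintype β] [Nonempty β]
    (A : SimpleGraph α) :
    domPoly (joinGraph A (completeGraph β)) =
      ((X + 1) ^ Fintype.card β - 1) * (X + 1) ^ Fintype.card α + domPoly A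
        - if Fintype.card α = 0 then 1 else 0 := by
  classical
  have summand (L : Finset α) (R : Finset β) :
      (if IsDomSet (joinGraph A (completeGraph β)) (L.disjSum R) then X ^ #(L.disjSum R) else 0)
        = X ^ #L * (if R ≠ ∅ then X ^ #R else 0)
          + if R = ∅ then (if L ≠ ∅ ∧ IsDomSet A L then (X : ℤ[X]) ^ #L else 0)
            else 0 := by
    rw [isDomSet_joinGraph_completeGraph_disjSum_iff, card_disjSum, pow_add]
    rcases R.eq_empty_or_nonempty with rfl | hR
    · simp [nonempty_iff_ne_empty]
    · simp [hR, hR.ne_empty]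
  rw [domPoly_eq_sum, ← (sumEquiv (α := α) (β := β)).symm.toEquiv.sum_comp,
    Fintype.sum_prod_type]
  refine (sum_congr rfl fun L _ => sum_congr rfl fun R _ => summand L R).trans ?_
  simp only [sum_add_distrib, ← mul_sum, ← sum_mul, sum_ite_eq', mem_univ, if_true]
  have hR : ∑ R : Finset β, (if R ≠ ∅ then X ^ #R else 0 : ℤ[X]) =
      (X + 1) ^ Fintype.card β - 1 := by
    rw [← sum_filter, filter_ne', sum_erase_eq_sub (mem_univ _), sum_pow_card_finset, card_empty,
      pow_zero]
  have hL : ∑ L : Finset α, (if L ≠ ∅ ∧ IsDomSet A L then X ^ #L else 0 : ℤ[X]) =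
      domPoly A - if Fintype.card α = 0 then 1 else 0 := by
    have h_empty : (if IsDomSet A ∅ then X ^ #(∅ : Finset α) else 0 : ℤ[X]) =
        if Fintype.card α = 0 then 1 else 0 := by
      simp [isDomSet_empty_iff, Fintype.card_eq_zero_iff]
    simp only [ite_and]
    rw [← sum_filter, filter_ne', domPoly_eq_sum, ← sum_erase_add _ _ (mem_univ ∅), h_empty,
      add_sub_cancel_right]
  rw [hR, hL, sum_pow_card_finset]
  ring

lemma card_le_coeff_one_domPoly_joinGraph_completeGraph [Fintype α] [Fintype β]
    (A : SimpleGraph α) :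
    (Fintype.card β : ℤ) ≤ (domPoly (joinGraph A (completeGraph β))).coeff 1 := by
  classical
  rw [coeff_one_domPoly, Nat.cast_le, ← card_univ]
  refine card_le_card_of_injOn Sum.inr (fun b _ => mem_filter.mpr ⟨mem_univ _, ?_⟩)
    Sum.inr_injective.injOn
  refine isDomSet_singleton_iff.mpr fun w hw => ?_
  cases w with
  | inl a => exact joinGraph_adj_inr_inl
  | inr c => simpa [eq_comm] using hw

lemma exists_universal_finset_of_domPoly_eq_joinGraph [Fintype W] [Fintype α] [Fintype β]
    {H : SimpleGraph W} {A : SimpleGraph α}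
    (h : domPoly H = domPoly (joinGraph A (completeGraph β))) :
    ∃ T : Finset W, #T = Fintype.card β ∧ ∀ v ∈ T, ∀ w, w ≠ v → H.Adj v w := by
  classical
  have hle := card_le_coeff_one_domPoly_joinGraph_completeGraph (β := β) A
  rw [← h, coeff_one_domPoly, Nat.cast_le] at hle
  obtain ⟨T, hsub, hT⟩ := exists_subset_card_eq hle
  exact ⟨T, hT, fun v hv => isDomSet_singleton_iff.mp (mem_filter.mp (hsub hv)).2⟩

section Iso

variable {α' β' : Type*} {H : SimpleGraph W}

def joinGraphCongr {A : SimpleGraph α} {A' : SimpleGraph α'} {B : SimpleGraph β}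
    {B' : SimpleGraph β'} (e₁ : A ≃g A') (e₂ : B ≃g B') :
    joinGraph A B ≃g joinGraph A' B' where
  toEquiv := e₁.toEquiv.sumCongr e₂.toEquiv
  map_rel_iff' := by rintro (a | b) (a' | b') <;> simp [Iso.map_adj_iff]

def joinGraphInduceComplIso (s : Set W) [DecidablePred (· ∈ s)]
    (h : ∀ v ∈ s, ∀ w ∉ s, H.Adj v w) : joinGraph (H.induce sᶜ) (H.induce s) ≃g H where
  toEquiv := (Equiv.sumComm _ _).trans (Equiv.Set.sumCompl s)
  map_rel_iff' := by
    rintro (⟨a, ha⟩ | ⟨a, ha⟩) (⟨b, hb⟩ | ⟨b, hb⟩)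
    · simp
    · simpa using (h b hb a ha).symm
    · simpa using h a ha b hb
    · simp

def induceIsoCompleteGraphOfIsClique {s : Set W} (hs : H.IsClique s) (e : s ≃ β) :
    H.induce s ≃g completeGraph β where
  toEquiv := e
  map_rel_iff' := by
    intro a b
    simp only [completeGraph_eq_top, top_adj, ne_eq, EmbeddingLike.apply_eq_iff_eq, comap_adj,
      Function.Embedding.subtype_apply]
    exact ⟨fun hab => hs a.2 b.2 (Subtype.coe_injective.ne hab),
      fun hadj hab => hadj.ne (congrArg Subtype.val hab)⟩

def joinGraphCompleteGraphIsoOfUniversal (s : Set W) [DecidablePred (· ∈ s)]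
    (hs : ∀ v ∈ s, ∀ w, w ≠ v → H.Adj v w) (e : s ≃ β) :
    joinGraph (H.induce sᶜ) (completeGraph β) ≃g H :=
  (joinGraphCongr .refl
      (induceIsoCompleteGraphOfIsClique (fun v hv w _ hvw => hs v hv w hvw.symm) e)).symm.trans
    (joinGraphInduceComplIso s fun v hv w hw => hs v hv w (ne_of_mem_of_not_mem hv hw).symm)

end Iso

theorem dUnique_join_complete {V : Type} [Fintype V] (G : SimpleGraph V)
    (hG : DUnique G) (m : ℕ) (hm : 1 ≤ m) :
    DUnique (joinGraph G (completeGraph (Fin m))) := by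
  classical
  have : Nonempty (Fin m) := Fin.pos_iff_nonempty.mp hm
  intro W _ H hH
  have hW : Fintype.card W = Fintype.card V + m := by
    simpa using card_eq_of_domPoly_eq hH
  obtain ⟨T, hTm, hT⟩ := exists_universal_finset_of_domPoly_eq_joinGraph hH
  rw [Fintype.card_fin] at hTm
  let H₀ := H.induce (T : Set W)ᶜ
  let e : joinGraph H₀ (completeGraph (Fin m)) ≃g H :=
    joinGraphCompleteGraphIsoOfUniversal _ hT (T.equivFin.trans (finCongr hTm))
  have hH₀ : Fintype.card ↥((T : Set W)ᶜ) = Fintype.card V := by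
    rw [Fintype.card_compl_set]
    simp only [SetLike.coe_sort_coe, Fintype.card_coe]
    omega
  have hD : domPoly H₀ = domPoly G := by
    have h := (domPoly_congr e).trans hH
    rw [domPoly_joinGraph_completeGraph, domPoly_joinGraph_completeGraph, hH₀] at h
    linear_combination h
  obtain ⟨e₀⟩ := hG _ H₀ hD
  exact ⟨e.symm.trans (joinGraphCongr e₀ .refl)⟩
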